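/- arXiv:2010.13273 — 3 statements merged into one kernel-verified Lean document; each statement's English description precedes it below -/
import Mathlib

section
/- Let (X, d) be a metric space, let ι be a finite index type, let p : ι → X be a family of pivots, let q ∈ X be a query with mapped vector q', and let τ ≥ 0. Let C ⊆ (ι → ℝ) be a cell in the pivot space. If C is disjoint from the square query region SQR(q', τ), then for every x ∈ X whose mapped vector x' lies in C, q does not match x, i.e., d(q, x) > τ. -/
def pivotMap {X ι : Type*} [PseudoMetricSpace X] (p : ι → X) (x : X) : ι → ℝ :=
  fun i => dist x (p i)

def squareQueryRegion {ι : Type*} (q' : ι → ℝ) (τ : ℝ) : Set (ι → ℝ) :=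
  {v | ∀ i, |v i - q' i| ≤ τ}

lemma pivotMap_mem_squareQueryRegion {X ι : Type*} [PseudoMetricSpace X] (p : ι → X)
    {q x : X} {τ : ℝ} (h : dist q x ≤ τ) :
    pivotMap p x ∈ squareQueryRegion (pivotMap p q) τ := fun i =>
  calc |dist x (p i) - dist q (p i)| ≤ dist x q := abs_dist_sub_le x q (p i)
    _ = dist q x := dist_comm x q
    _ ≤ τ := h

theorem vector_cell_filtering_general {X : Type*} [MetricSpace X] {ι : Type*}
    (p : ι → X) (q : X) (τ : ℝ) (C : Set (ι → ℝ))
    (hdisj : Disjoint C {v : ι → ℝ | ∀ i, |v i - dist q (p i)| ≤ τ}) :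
    ∀ x : X, (fun i => dist x (p i)) ∈ C → dist q x > τ := by
  intro x hx
  by_contra! hmatch
  exact Set.disjoint_left.mp hdisj hx (pivotMap_mem_squareQueryRegion p hmatch)

/-- Vector-Cell Filtering (Lemma 3): if a cell `C` in the pivot space is disjoint
from the square query region `SQR(q', τ)`, then no vector whose mapped vector lies
in `C` matches the query `q`. -/
theorem vector_cell_filtering {X : Type*} [MetricSpace X] {ι : Type*} [Fintype ι]
    (p : ι → X) (q : X) (τ : ℝ) (hτ : 0 ≤ τ) (C : Set (ι → ℝ))
    (hdisj : Disjoint C {v : ι → ℝ | ∀ i, |v i - dist q (p i)| ≤ τ}) :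
    ∀ x : X, (fun i => dist x (p i)) ∈ C → dist q x > τ :=
  vector_cell_filtering_general p q τ C hdisj
end

section
/- Let (X, d) be a metric space, let ι be a finite index type, let p : ι → X be a family of pivots, and let τ ≥ 0 and L ≥ 0 be real numbers. Let c₀ : ι → ℝ be the center of a query cell c_q = {v : ι → ℝ | ∀ i, |v(i) − c₀(i)| ≤ L/2} of edge length L, and let C ⊆ (ι → ℝ) be a target cell. If C is disjoint from SQR(c₀, τ + L/2), then for every x ∈ X whose mapped vector lies in C and every q ∈ X whose mapped vector lies in c_q, q does not match x, i.e., d(q, x) > τ. -/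
/-! The pivot mapping is 1-Lipschitz for the sup distance on `ι → ℝ`: by the triangle inequality,
`|d(x, pᵢ) - d(q, pᵢ)| ≤ d(q, x)` for every pivot. So if `q` matches `x`, the mapped vector of `x`
lies within `τ` of that of `q` in every coordinate, hence within `τ + L/2` of the cell center `c₀`,
i.e. in `SQR(c₀, τ + L/2)`, which `C` avoids. -/

theorem abs_dist_sub_le_dist_add {X : Type*} [PseudoMetricSpace X] {x q y : X} {c r : ℝ}
    (hq : |dist q y - c| ≤ r) : |dist x y - c| ≤ dist q x + r :=
  calc |dist x y - c| ≤ |dist x y - dist q y| + |dist q y - c| := abs_sub_le _ _ _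
    _ ≤ dist q x + r := by
      gcongr
      rw [abs_sub_comm]
      exact abs_dist_sub_le q x y

theorem cell_cell_filtering_general {X : Type*} [MetricSpace X] {ι : Type*}
    (p : ι → X) (τ L : ℝ) (c₀ : ι → ℝ)
    (C : Set (ι → ℝ))
    (hdisj : Disjoint C {v : ι → ℝ | ∀ i, |v i - c₀ i| ≤ τ + L / 2}) :
    ∀ x q : X, (fun i => dist x (p i)) ∈ C →
      (fun i => dist q (p i)) ∈ {v : ι → ℝ | ∀ i, |v i - c₀ i| ≤ L / 2} →
      dist q x > τ := by
  intro x q hxC hq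
  by_contra! hmatch
  refine Set.disjoint_left.mp hdisj hxC fun i => ?_
  calc |dist x (p i) - c₀ i| ≤ dist q x + L / 2 := abs_dist_sub_le_dist_add (hq i)
    _ ≤ τ + L / 2 := by linarith

/-- Cell-Cell Filtering (Lemma 4): if a target cell `C` is disjoint from the square
query region `SQR(c₀, τ + L/2)` built around the center `c₀` of a query cell of edge
length `L`, then no vector mapped into `C` matches any query mapped into the query
cell. -/
theorem cell_cell_filtering {X : Type*} [MetricSpace X] {ι : Type*} [Fintype ι]
    (p : ι → X) (τ L : ℝ) (hτ : 0 ≤ τ) (hL : 0 ≤ L) (c₀ : ι → ℝ)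
    (C : Set (ι → ℝ))
    (hdisj : Disjoint C {v : ι → ℝ | ∀ i, |v i - c₀ i| ≤ τ + L / 2}) :
    ∀ x q : X, (fun i => dist x (p i)) ∈ C →
      (fun i => dist q (p i)) ∈ {v : ι → ℝ | ∀ i, |v i - c₀ i| ≤ L / 2} →
      dist q x > τ :=
  cell_cell_filtering_general p τ L c₀ C hdisj
end

section
/- Let (X, d) be a metric space, let ι be a finite index type, let p : ι → X be a family of pivots, and let τ ≥ 0. Let c_q ⊆ (ι → ℝ) be a query cell and C ⊆ (ι → ℝ) a target cell in the pivot space. If there exists an index i such that for every v ∈ C and every w ∈ c_q, v(i) + w(i) ≤ τ (i.e., C is contained in the minimum rectangle query region over all mapped query vectors in c_q for pivot p(i)), then for every x ∈ X whose mapped vector lies in C and every q ∈ X whose mapped vector lies in c_q, q matches x, i.e., d(q, x) ≤ τ. -/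
theorem cell_cell_matching_general {X : Type*} [MetricSpace X] {ι : Type*}
    (p : ι → X) (τ : ℝ) (cq C : Set (ι → ℝ))
    (h : ∃ i, ∀ v ∈ C, ∀ w ∈ cq, v i + w i ≤ τ) :
    ∀ x q : X, (fun i => dist x (p i)) ∈ C → (fun i => dist q (p i)) ∈ cq →
      dist q x ≤ τ := by
  obtain ⟨i, hi⟩ := h
  intro x q hx hq
  calc dist q x ≤ dist x (p i) + dist q (p i) :=
        add_comm (dist q (p i)) _ ▸ dist_triangle_right q x (p i)
    _ ≤ τ := hi _ hx _ hq

/-- Cell-Cell Matching (Lemma 6): if a target cell `C` is contained in the minimum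
rectangle query region over all mapped query vectors of a query cell `c_q` for some
pivot index `i` (i.e. `v i + w i ≤ τ` for all `v ∈ C` and `w ∈ c_q`), then every
vector mapped into `C` matches every query mapped into `c_q`. -/
theorem cell_cell_matching {X : Type*} [MetricSpace X] {ι : Type*} [Fintype ι]
    (p : ι → X) (τ : ℝ) (hτ : 0 ≤ τ) (cq C : Set (ι → ℝ))
    (h : ∃ i, ∀ v ∈ C, ∀ w ∈ cq, v i + w i ≤ τ) :
    ∀ x q : X, (fun i => dist x (p i)) ∈ C → (fun i => dist q (p i)) ∈ cq →
      dist q x ≤ τ :=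
  cell_cell_matching_general p τ cq C h
end
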